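/- arXiv:1707.06315 — 3 statements merged into one kernel-verified Lean document; each statement's English description precedes it below -/
import Mathlib

section
/- There exists no obstruction to making any prescribed match assignment 'reasonable' by appending identical covariates: for any n, p ∈ ℕ, any covariate data X : Fin n → (Fin p → Bool), any group assignment MG : Fin n → ℕ, and any real d_max > 0, there exist q ∈ ℕ and appended covariates A : Fin n → (Fin q → Bool) such that (i) A u = A v whenever MG u = MG v, and (ii) for all units u, v with MG u = MG v, the normalized distance √( |{j ∈ Fin (p+q) : the j-th coordinate of the concatenated covariate vectors [X u, A u] and [X v, A v] differ}| / (p+q) ) < d_max. -/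
/-! Append `q` constant columns, the same for every unit. They add no disagreements, so the
Hamming distance within a group stays at most `p`, while the normalizer `p + q` grows without
bound. -/

theorem hammingDist_append {α : Type*} [DecidableEq α] {m k : ℕ} (x y : Fin m → α)
    (a b : Fin k → α) :
    hammingDist (Fin.append x a) (Fin.append y b) = hammingDist x y + hammingDist a b := by
  simp only [hammingDist, Finset.card_filter, Fin.sum_univ_add, Fin.append_left, Fin.append_right]

theorem exists_nat_sqrt_div_add_lt (p : ℕ) {d : ℝ} (hd : 0 < d) :
    ∃ q : ℕ, ∀ c : ℕ, c ≤ p → √((c : ℝ) / (p + q)) < d := by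
  obtain ⟨q, hq⟩ : ∃ q : ℕ, (p : ℝ) / d ^ 2 < q := exists_nat_gt _
  have hq₀ : (0 : ℝ) < q := (div_nonneg p.cast_nonneg (sq_nonneg d)).trans_lt hq
  refine ⟨q, fun c hc => (Real.sqrt_lt' hd).2 ?_⟩
  calc (c : ℝ) / (p + q) ≤ p / q := by
        gcongr
        exact le_add_of_nonneg_left p.cast_nonneg
    _ < d ^ 2 := (div_lt_iff₀ hq₀).2 ((div_lt_iff₀' (pow_pos hd 2)).1 hq)

/-- Proposition 1 (mathematical core): for any covariate data, any match assignment,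
and any positive threshold `dmax`, one can append covariates (identical within each
matched group) so that the normalized distance between any two units in the same
matched group is below `dmax`. -/
theorem adversarial_append_makes_assignment_reasonable
    (n p : ℕ) (X : Fin n → Fin p → Bool) (MG : Fin n → ℕ)
    (dmax : ℝ) (hd : 0 < dmax) :
    ∃ (q : ℕ) (A : Fin n → Fin q → Bool),
      (∀ u v : Fin n, MG u = MG v → A u = A v) ∧
      (∀ u v : Fin n, MG u = MG v →
        Real.sqrt
          (((Finset.univ.filter
              (fun j : Fin (p + q) =>
                Fin.append (X u) (A u) j ≠ Fin.append (X v) (A v) j)).card : ℝ)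
            / ((p : ℝ) + (q : ℝ))) < dmax) := by
  obtain ⟨q, hq⟩ := exists_nat_sqrt_div_add_lt p hd
  refine ⟨q, fun _ _ => false, fun _ _ _ => rfl, fun u v _ => ?_⟩
  change √((hammingDist (Fin.append (X u) fun _ => false) (Fin.append (X v) fun _ => false) : ℕ)
    / ((p : ℝ) + q)) < dmax
  rw [hammingDist_append, hammingDist_self, add_zero]
  exact hq _ (hammingDist_le_card_fintype.trans_eq (Fintype.card_fin p))
end

section
/- Let p ∈ ℕ and h : Fin p → ℕ be nondecreasing (h i ≤ h j whenever i ≤ j). Then the map sending a digit vector a : Fin p → ℕ to the natural number Σ_{k} a_k · (h_k)^k is injective on the set {a : Fin p → ℕ | ∀ k, a_k < h_k}. -/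
/-!
Split off the top digit: with `M = h (p-1)`, monotonicity bounds every lower arity by `M`, so the
lower part of the encoding is at most `∑_{k<p-1} (M-1) M^k < M^(p-1)`, the weight of the top digit.
Hence the encoding determines the top digit (as a quotient) and the lower part (as a remainder),
and induction on `p` finishes.
-/

open Finset

theorem Nat.add_mul_eq_add_mul_iff_of_lt {w x y a b : ℕ} (hx : x < w) (hy : y < w) :
    x + a * w = y + b * w ↔ x = y ∧ a = b := by
  refine ⟨fun h ↦ ?_, fun ⟨hxy, hab⟩ ↦ hxy ▸ hab ▸ rfl⟩
  have hw : 0 < w := (Nat.zero_le x).trans_lt hx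
  have hab : a = b := by
    simpa [Nat.add_mul_div_right _ _ hw, Nat.div_eq_of_lt hx, Nat.div_eq_of_lt hy] using
      congrArg (· / w) h
  exact ⟨by subst hab; omega, hab⟩

theorem sum_mul_pow_lt_pow {n M : ℕ} (a h : Fin n → ℕ) (ha : ∀ k, a k < h k)
    (hM : ∀ k, h k ≤ M) : ∑ k, a k * h k ^ (k : ℕ) < M ^ n := by
  obtain _ | n := n
  · simp
  have hM1 : 1 ≤ M := Nat.one_le_of_lt ((ha 0).trans_le (hM 0))
  calc ∑ k, a k * h k ^ (k : ℕ)
      ≤ ∑ k : Fin (n + 1), (M - 1) * M ^ (k : ℕ) :=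
        sum_le_sum fun k _ ↦ Nat.mul_le_mul (Nat.le_sub_one_of_lt ((ha k).trans_le (hM k)))
          (Nat.pow_le_pow_left (hM k) _)
    _ = M ^ (n + 1) - 1 := by
        rw [Fin.sum_univ_eq_sum_range (fun k ↦ (M - 1) * M ^ k), ← mul_sum, mul_comm,
          geom_sum_mul_of_one_le hM1]
    _ < M ^ (n + 1) := Nat.sub_lt (Nat.pow_pos hM1) Nat.one_pos

/-- Uniqueness of the mixed-radix encoding used by FLAME's bit-vector implementation:
with nondecreasing arities `h`, the map `a ↦ ∑ₖ aₖ (hₖ)^k` is injective on digit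
vectors satisfying `aₖ < hₖ` for all `k`. -/
theorem mixed_radix_encoding_injective
    (p : ℕ) (h : Fin p → ℕ) (hmono : ∀ i j : Fin p, i ≤ j → h i ≤ h j) :
    Set.InjOn (fun a : Fin p → ℕ => ∑ k : Fin p, a k * (h k) ^ (k : ℕ))
      {a : Fin p → ℕ | ∀ k, a k < h k} := by
  induction p with
  | zero => exact fun a _ b _ _ ↦ Subsingleton.elim a b
  | succ n ih =>
    intro a ha b hb hab
    have lower_lt (c : Fin (n + 1) → ℕ) (hc : ∀ k, c k < h k) :
        ∑ k : Fin n, c k.castSucc * h k.castSucc ^ (k : ℕ) < h (Fin.last n) ^ n :=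
      sum_mul_pow_lt_pow _ _ (fun k ↦ hc _) fun k ↦ hmono _ _ (Fin.le_last _)
    simp only [Fin.sum_univ_castSucc, Fin.val_castSucc, Fin.val_last] at hab
    obtain ⟨hlower, hlast⟩ :=
      (Nat.add_mul_eq_add_mul_iff_of_lt (lower_lt a ha) (lower_lt b hb)).1 hab
    have hinit : (fun k : Fin n ↦ a k.castSucc) = fun k ↦ b k.castSucc :=
      ih (fun k ↦ h k.castSucc) (fun i j hij ↦ hmono _ _ (Fin.castSucc_le_castSucc_iff.2 hij))
        (fun k ↦ ha _) (fun k ↦ hb _) hlower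
    exact funext (Fin.forall_fin_succ'.2 ⟨congrFun hinit, hlast⟩)
end

section
/- Let p ∈ ℕ and h : Fin p → ℕ be nondecreasing with 2 ≤ h_0. Then the map sending a pair (t, a), where t ∈ ℕ with t < 2 and a : Fin p → ℕ with a_k < h_k for all k, to the natural number t + Σ_k a_k · (h_k)^{k+1} is injective. -/
/-!
Read `b⁺` in base `M = h_{p-1}`: the treatment bit and every `aₖ` are digits below `M`, and
`hₖ ≤ M` by monotonicity, so everything except the top term `a_{p-1} · M^p` is smaller than `M^p`.
Division by `M^p` therefore recovers `a_{p-1}` and the encoding of the remaining covariates,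
and induction on `p` recovers the rest.
-/

namespace TreatmentEncoding

def encode {p : ℕ} (h a : Fin p → ℕ) (t : ℕ) : ℕ :=
  t + ∑ k, a k * h k ^ ((k : ℕ) + 1)

theorem encode_succ {p : ℕ} (h a : Fin (p + 1) → ℕ) (t : ℕ) :
    encode h a t =
      encode (Fin.init h) (Fin.init a) t + a (Fin.last p) * h (Fin.last p) ^ (p + 1) := by
  simp only [encode, Fin.sum_univ_castSucc, Fin.val_castSucc, Fin.val_last, Fin.init_def, add_assoc]

theorem encode_lt_pow {p M : ℕ} (hM : 2 ≤ M) {h a : Fin p → ℕ} (hh : ∀ k, h k ≤ M)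
    (ha : ∀ k, a k < h k) {t : ℕ} (ht : t < 2) : encode h a t < M ^ (p + 1) := by
  induction p with
  | zero => simpa [encode] using ht.trans_le hM
  | succ p ih =>
    have hinit : encode (Fin.init h) (Fin.init a) t < M ^ (p + 1) :=
      ih (fun _ => hh _) (fun _ => ha _)
    have hlast : a (Fin.last p) * h (Fin.last p) ^ (p + 1) ≤ (M - 1) * M ^ (p + 1) :=
      Nat.mul_le_mul (Nat.le_sub_one_of_lt ((ha _).trans_le (hh _))) (Nat.pow_le_pow_left (hh _) _)
    calc encode h a t
        = encode (Fin.init h) (Fin.init a) t + a (Fin.last p) * h (Fin.last p) ^ (p + 1) :=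
          encode_succ h a t
      _ < M ^ (p + 1) + (M - 1) * M ^ (p + 1) := Nat.add_lt_add_of_lt_of_le hinit hlast
      _ = M ^ (p + 1 + 1) := by
          rw [← one_add_mul, Nat.add_sub_cancel' (by omega), pow_succ' M (p + 1)]

theorem eq_and_eq_of_add_mul_eq {x y d d' b : ℕ} (hx : x < b) (hy : y < b)
    (h : x + d * b = y + d' * b) : x = y ∧ d = d' := by
  have hb : 0 < b := by omega
  rw [mul_comm d, mul_comm d'] at h
  obtain ⟨hd, hxm⟩ := (Nat.div_mod_unique hb).2 ⟨rfl, hx⟩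
  obtain ⟨hd', hym⟩ := (Nat.div_mod_unique hb).2 ⟨rfl, hy⟩
  rw [h] at hd hxm
  exact ⟨hxm.symm.trans hym, hd.symm.trans hd'⟩

theorem encode_injective {p : ℕ} {h : Fin p → ℕ} (hmono : Monotone h)
    (h2 : ∀ hp : 0 < p, 2 ≤ h ⟨0, hp⟩) {t t' : ℕ} (ht : t < 2) (ht' : t' < 2)
    {a a' : Fin p → ℕ} (ha : ∀ k, a k < h k) (ha' : ∀ k, a' k < h k)
    (heq : encode h a t = encode h a' t') : t = t' ∧ a = a' := by
  induction p with
  | zero => exact ⟨by simpa [encode] using heq, Subsingleton.elim a a'⟩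
  | succ p ih =>
    set M := h (Fin.last p)
    have hM : 2 ≤ M := (h2 p.succ_pos).trans (hmono (Fin.zero_le _))
    have hle : ∀ k, Fin.init h k ≤ M := fun _ => hmono (Fin.le_last _)
    rw [encode_succ, encode_succ] at heq
    obtain ⟨hinit, hlast⟩ := eq_and_eq_of_add_mul_eq
      (encode_lt_pow hM hle (fun _ => ha _) ht) (encode_lt_pow hM hle (fun _ => ha' _) ht') heq
    obtain ⟨rfl, hinit_eq⟩ := ih (hmono.comp Fin.strictMono_castSucc.monotone)
      (fun _ => h2 p.succ_pos) (fun _ => ha _) (fun _ => ha' _) hinit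
    refine ⟨rfl, ?_⟩
    rw [← Fin.snoc_init_self a, ← Fin.snoc_init_self a']
    exact congrArg₂ Fin.snoc hinit_eq hlast

end TreatmentEncoding

/-- Injectivity of the treatment-augmented encoding `b⁺ = t + ∑ₖ aₖ (hₖ)^(k+1)` used in
FLAME's bit-vector implementation: with nondecreasing arities `h` and `2 ≤ h 0`, two
(treatment, covariates) pairs with `t < 2` and `aₖ < hₖ` encode to the same number only
if they are equal. -/
theorem treatment_augmented_encoding_injective
    (p : ℕ) (h : Fin p → ℕ) (hmono : ∀ i j : Fin p, i ≤ j → h i ≤ h j)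
    (h2 : ∀ hp : 0 < p, 2 ≤ h ⟨0, hp⟩) :
    ∀ (t t' : ℕ), t < 2 → t' < 2 →
      ∀ (a a' : Fin p → ℕ), (∀ k, a k < h k) → (∀ k, a' k < h k) →
        (t + ∑ k : Fin p, a k * (h k) ^ ((k : ℕ) + 1)) =
          (t' + ∑ k : Fin p, a' k * (h k) ^ ((k : ℕ) + 1)) →
        t = t' ∧ a = a' :=
  fun _ _ ht ht' _ _ ha ha' heq =>
  TreatmentEncoding.encode_injective (fun i j => hmono i j) h2 ht ht' ha ha' heq
end
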